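/- Let r ≥ 1 and let 𝓑 ⊆ 𝓑' be 1-bracketings of r with #𝓑' = #𝓑 + 2. Then there exist exactly two 1-bracketings 𝓑'' of r with 𝓑 ⊊ 𝓑'' ⊊ 𝓑'. -/

import Mathlib

/-- A 1-bracket of `r` (Finset version): a nonempty consecutive subset of `{1, …, r}`. -/
def IsOneBracketF (r : ℕ) (B : Finset (Fin r)) : Prop :=
  B.Nonempty ∧ ∀ i j k : Fin r, i ≤ j → j ≤ k → i ∈ B → k ∈ B → j ∈ B

/-- A 1-bracketing of `r` (Finset version). -/
def IsOneBracketingF (r : ℕ) (Bs : Finset (Finset (Fin r))) : Prop :=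
  (∀ B ∈ Bs, IsOneBracketF r B) ∧
  (∀ B ∈ Bs, ∀ B' ∈ Bs, (B ∩ B').Nonempty → B ⊆ B' ∨ B' ⊆ B) ∧
  Finset.univ ∈ Bs ∧ ∀ i : Fin r, ({i} : Finset (Fin r)) ∈ Bs

/-! Being a 1-bracketing is a conjunction of a condition closed under subfamilies (brackets,
pairwise nesting) and one closed under superfamilies (containing `univ` and the singletons).
Hence every family between two 1-bracketings is one, and the families strictly between
`𝓑 ⊆ 𝓑'` are the `2 ^ 2 - 2 = 2` elements of the open interval `Finset.Ioo 𝓑 𝓑'`. -/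

theorem IsOneBracketingF.of_subset_of_subset {r : ℕ} {Bs C Bs' : Finset (Finset (Fin r))}
    (h : IsOneBracketingF r Bs) (h' : IsOneBracketingF r Bs')
    (hBC : Bs ⊆ C) (hCB' : C ⊆ Bs') : IsOneBracketingF r C :=
  ⟨fun B hB => h'.1 B (hCB' hB),
    fun B hB B' hB' hne => h'.2.1 B (hCB' hB) B' (hCB' hB') hne,
    hBC h.2.2.1, fun i => hBC (h.2.2.2 i)⟩

theorem setOf_isOneBracketingF_between_eq_Ioo {r : ℕ} {Bs Bs' : Finset (Finset (Fin r))}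
    (h : IsOneBracketingF r Bs) (h' : IsOneBracketingF r Bs') :
    {C : Finset (Finset (Fin r)) | IsOneBracketingF r C ∧ Bs ⊂ C ∧ C ⊂ Bs'} =
      ↑(Finset.Ioo Bs Bs') := by
  ext C
  simp only [Set.mem_ofPred_eq, Finset.coe_Ioo, Set.mem_Ioo, and_iff_right_iff_imp]
  exact fun ⟨hBC, hCB'⟩ => h.of_subset_of_subset h' hBC.subset hCB'.subset

theorem stmt8_general (r : ℕ) (Bs Bs' : Finset (Finset (Fin r)))
    (h1 : IsOneBracketingF r Bs) (h2 : IsOneBracketingF r Bs')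
    (hsub : Bs ⊆ Bs') (hcard : Bs'.card = Bs.card + 2) :
    ({C : Finset (Finset (Fin r)) |
        IsOneBracketingF r C ∧ Bs ⊂ C ∧ C ⊂ Bs'}).ncard = 2 := by
  rw [setOf_isOneBracketingF_between_eq_Ioo h1 h2, Set.ncard_coe_finset,
    Finset.card_Ioo_finset hsub, hcard, Nat.add_sub_cancel_left]
  rfl

/-- Let `r ≥ 1` and let `𝓑 ⊆ 𝓑'` be 1-bracketings of `r` with
`#𝓑' = #𝓑 + 2`.  Then there exist exactly two 1-bracketings `𝓑''` of `r` with
`𝓑 ⊊ 𝓑'' ⊊ 𝓑'`. -/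
theorem stmt8 (r : ℕ) (hr : 1 ≤ r) (Bs Bs' : Finset (Finset (Fin r)))
    (h1 : IsOneBracketingF r Bs) (h2 : IsOneBracketingF r Bs')
    (hsub : Bs ⊆ Bs') (hcard : Bs'.card = Bs.card + 2) :
    ({C : Finset (Finset (Fin r)) |
        IsOneBracketingF r C ∧ Bs ⊂ C ∧ C ⊂ Bs'}).ncard = 2 :=
  stmt8_general r Bs Bs' h1 h2 hsub hcard
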